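/- The Nth roots of unity maximize the sum of pairwise distances on the circle: for every N ≥ 2 and every N points x_1, …, x_N on the unit circle S¹ ⊂ R², ∑_{j=1}^N ∑_{k=1}^N |x_j − x_k| ≤ 2N · cot(π/(2N)), with equality when the points are the Nth roots of unity; hence the maximal sum-of-distances energy E_{−1}(S¹; N) := sup over all N-point configurations on S¹ of ∑_{j≠k} |x_j − x_k| equals 2N · cot(π/(2N)). -/

import Mathlib

open MeasureTheory Metric Real Filter
open scoped BigOperators ENNReal NNReal RealInnerProductSpace Topology

noncomputable section

/-- The point `(cos θ, sin θ)` on the unit circle `S¹ ⊂ ℝ²`. -/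
def circlePoint (θ : ℝ) : EuclideanSpace ℝ (Fin (1 + 1)) :=
  WithLp.toLp 2 ![Real.cos θ, Real.sin θ]

/-- The `N`th roots of unity `x_k = (cos(2πk/N), sin(2πk/N))`, `k = 1, …, N`. -/
def rootsOfUnityConfig (N : ℕ) : Fin N → EuclideanSpace ℝ (Fin (1 + 1)) :=
  fun k => circlePoint (2 * π * ((k : ℕ) + 1) / N)

/-- The maximal sum-of-distances energy
`E_{−1}(S¹; N) = sup { ∑_{j≠k} |x_j − x_k| }` over all `N`-point configurations on the
unit circle `S¹ ⊂ ℝ²`. -/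
def maxSumDistCircle (N : ℕ) : ℝ :=
  ⨆ x : {x : Fin N → EuclideanSpace ℝ (Fin (1 + 1)) //
    ∀ k, x k ∈ sphere (0 : EuclideanSpace ℝ (Fin (1 + 1))) 1},
    ∑ j, ∑ k, if j ≠ k then dist (x.1 j) (x.1 k) else 0

/-!
Write the points as `circlePoint θ_k` with sorted angles, and extend the angles to a monotone
sequence `Ψ : ℕ → ℝ` with `Ψ (n + N) = Ψ n + 2π`. Grouping the pairs `(j, j + m)` by their cyclic
offset `m`, the chord `2 |sin ((Ψ j - Ψ (j + m)) / 2)|` subtends an arc in `[0, 2π]`, and these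
arcs have total length `2πm`; by concavity of `sin` on `[0, π]` the `N` chords of offset `m` sum to
at most `2N sin (πm/N)`, with equality for equally spaced points. Finally
`∑_{m<N} sin (πm/N) = cot (π/(2N))` by telescoping against `2 sin (π/(2N))`.
-/

open Finset

theorem Finset.sum_range_sub_shift {M : Type*} [AddCommGroup M] (f : ℕ → M) (n m : ℕ) :
    ∑ j ∈ range n, (f (j + m) - f j) = ∑ i ∈ range m, (f (i + n) - f i) := by
  have h := (sum_range_add f m n).symm.trans (add_comm m n ▸ sum_range_add f n m)
  simp only [sum_sub_distrib, add_comm _ m, add_comm _ n, sub_eq_sub_iff_add_eq_add]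
  rw [add_comm, h, add_comm]

theorem Fintype.sum_sum_eq_sum_sum_add {G M : Type*} [AddGroup G] [Fintype G] [AddCommMonoid M]
    (f : G → G → M) : ∑ j, ∑ k, f j k = ∑ m, ∑ j, f j (j + m) :=
  (Fintype.sum_congr _ _ fun j ↦ (Fintype.sum_equiv (Equiv.addLeft j) _ _ fun _ ↦ rfl).symm).trans
    Finset.sum_comm

theorem ConcaveOn.sum_le_card_mul_map_average {ι E : Type*} [AddCommGroup E] [Module ℝ E]
    {s : Set E} {f : E → ℝ} (hf : ConcaveOn ℝ s f) (t : Finset ι) {p : ι → E}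
    (hp : ∀ i ∈ t, p i ∈ s) :
    ∑ i ∈ t, f (p i) ≤ #t * f ((#t : ℝ)⁻¹ • ∑ i ∈ t, p i) := by
  rcases t.eq_empty_or_nonempty with rfl | ht
  · simp
  have hcard : (0 : ℝ) < #t := by exact_mod_cast ht.card_pos
  have h := hf.le_map_sum (w := fun _ ↦ (#t : ℝ)⁻¹) (fun _ _ ↦ by positivity)
    (by simp [hcard.ne']) hp
  rw [← Finset.smul_sum, ← Finset.smul_sum, smul_eq_mul] at h
  rwa [← inv_mul_le_iff₀ hcard]

section Circle

open Complex

lemma circlePoint_eq_repr_exp (θ : ℝ) :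
    circlePoint θ = orthonormalBasisOneI.repr (exp (θ * I)) := by
  ext i
  fin_cases i <;> simp [circlePoint, exp_ofReal_mul_I_re, exp_ofReal_mul_I_im]

lemma circlePoint_periodic : Function.Periodic circlePoint (2 * π) := by
  intro θ
  simp [circlePoint]

lemma circlePoint_mem_sphere (θ : ℝ) : circlePoint θ ∈ sphere 0 1 := by
  rw [mem_sphere_zero_iff_norm, circlePoint_eq_repr_exp, LinearIsometryEquiv.norm_map,
    norm_exp_ofReal_mul_I]

lemma dist_circlePoint (a b : ℝ) :
    dist (circlePoint a) (circlePoint b) = 2 * |Real.sin ((a - b) / 2)| := by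
  have h : exp (a * I) - exp (b * I) = exp (b * I) * (exp (I * (a - b : ℝ)) - 1) := by
    rw [mul_sub, ← Complex.exp_add]; push_cast; ring_nf
  rw [circlePoint_eq_repr_exp, circlePoint_eq_repr_exp, LinearIsometryEquiv.dist_map,
    dist_eq_norm, h, norm_mul, norm_exp_ofReal_mul_I, one_mul, norm_exp_I_mul_ofReal_sub_one,
    norm_mul, Real.norm_eq_abs, Real.norm_eq_abs, abs_two]

lemma exists_mem_Ioc_circlePoint_eq {x : EuclideanSpace ℝ (Fin (1 + 1))} (hx : x ∈ sphere 0 1) :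
    ∃ θ ∈ Set.Ioc (-π) π, circlePoint θ = x := by
  set z := orthonormalBasisOneI.repr.symm x
  have hz : ‖z‖ = 1 := by rw [LinearIsometryEquiv.norm_map]; simpa using hx
  refine ⟨arg z, ⟨neg_pi_lt_arg z, arg_le_pi z⟩, ?_⟩
  rw [circlePoint_eq_repr_exp, ← one_mul (cexp _), ← ofReal_one, ← hz, norm_mul_exp_arg_mul_I,
    LinearIsometryEquiv.apply_symm_apply]

end Circle

lemma sum_range_sin_pi_mul_div (N : ℕ) :
    ∑ m ∈ range N, sin (π * m / N) = cot (π / (2 * N)) := by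
  rcases N.eq_zero_or_pos with rfl | hN
  · simp [Real.cot_eq_cos_div_sin]
  set s := π / (2 * N)
  have hs : 0 < sin s := sin_pos_of_pos_of_lt_pi (by positivity) <| by
    rw [div_lt_iff₀ (by positivity)]
    nlinarith [pi_pos, (Nat.one_le_cast (α := ℝ)).2 hN]
  have hterm (m : ℕ) : sin (π * m / N) * (2 * sin s) =
      cos ((2 * m - 1) * s) - cos ((2 * (m + 1 : ℕ) - 1) * s) := by
    have hsub : π * m / N - s = (2 * m - 1) * s := by simp only [s]; field_simp
    have hadd : π * m / N + s = (2 * (m + 1 : ℕ) - 1) * s := by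
      simp only [s]; push_cast; field_simp; ring
    rw [← mul_assoc, mul_comm _ 2, two_mul_sin_mul_sin, hsub, hadd]
  have hsum : (∑ m ∈ range N, sin (π * m / N)) * (2 * sin s) = 2 * cos s := by
    have hlast : (2 * N - 1) * s = π - s := by simp only [s]; field_simp
    rw [sum_mul, sum_congr rfl fun m _ ↦ hterm m, sum_range_sub']
    push_cast
    rw [hlast, cos_pi_sub, mul_zero, zero_sub, neg_one_mul, cos_neg]
    ring
  rw [cot_eq_cos_div_sin, eq_div_iff hs.ne']
  linarith

section AngleLift

variable {N : ℕ} {Ψ : ℕ → ℝ}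

lemma circlePoint_comp_periodic (hΨ : ∀ n, Ψ (n + N) = Ψ n + 2 * π) :
    Function.Periodic (circlePoint ∘ Ψ) N := fun n ↦ by
  simp only [Function.comp_apply, hΨ, circlePoint_periodic (Ψ n)]

lemma dist_circlePoint_fin_add [NeZero N] (hΨ : ∀ n, Ψ (n + N) = Ψ n + 2 * π) (j m : Fin N) :
    dist (circlePoint (Ψ j)) (circlePoint (Ψ ↑(j + m))) = 2 * |sin ((Ψ j - Ψ (j + m)) / 2)| := by
  have hmod := (circlePoint_comp_periodic hΨ).map_mod_nat (j + m)
  rw [Function.comp_apply, Function.comp_apply] at hmod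
  rw [Fin.val_add, hmod, dist_circlePoint]

lemma sum_sum_dist_circlePoint_eq [NeZero N] (hΨ : ∀ n, Ψ (n + N) = Ψ n + 2 * π) :
    ∑ j : Fin N, ∑ k : Fin N, dist (circlePoint (Ψ j)) (circlePoint (Ψ k)) =
      ∑ m ∈ range N, ∑ j ∈ range N, 2 * |sin ((Ψ j - Ψ (j + m)) / 2)| := by
  rw [Fintype.sum_sum_eq_sum_sum_add,
    ← Fin.sum_univ_eq_sum_range (fun m ↦ ∑ j ∈ range N, 2 * |sin ((Ψ j - Ψ (j + m)) / 2)|)]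
  refine Fintype.sum_congr _ _ fun m ↦ ?_
  rw [← Fin.sum_univ_eq_sum_range (fun j ↦ 2 * |sin ((Ψ j - Ψ (j + m)) / 2)|)]
  exact Fintype.sum_congr _ _ fun j ↦ dist_circlePoint_fin_add hΨ j m

lemma sum_abs_sin_half_sub_le (hmono : Monotone Ψ) (hΨ : ∀ n, Ψ (n + N) = Ψ n + 2 * π)
    {m : ℕ} (hm : m ≤ N) :
    ∑ j ∈ range N, |sin ((Ψ j - Ψ (j + m)) / 2)| ≤ N * sin (π * m / N) := by
  have hmem (j : ℕ) : (Ψ (j + m) - Ψ j) / 2 ∈ Set.Icc 0 π := by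
    have := hmono (Nat.le_add_right j m)
    have := hmono (Nat.add_le_add_left hm j)
    constructor <;> linarith [hΨ j]
  have habs (j : ℕ) : |sin ((Ψ j - Ψ (j + m)) / 2)| = sin ((Ψ (j + m) - Ψ j) / 2) := by
    rw [← neg_sub, neg_div, sin_neg, abs_neg,
      abs_of_nonneg (sin_nonneg_of_nonneg_of_le_pi (hmem j).1 (hmem j).2)]
  have hsum : ∑ j ∈ range N, (Ψ (j + m) - Ψ j) / 2 = π * m := by
    rw [← sum_div, sum_range_sub_shift]
    simp only [hΨ, add_sub_cancel_left, sum_const, card_range, nsmul_eq_mul]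
    ring
  have := strictConcaveOn_sin_Icc.concaveOn.sum_le_card_mul_map_average (range N)
    fun j _ ↦ hmem j
  rw [hsum, card_range, smul_eq_mul] at this
  simp_rw [habs]
  convert this using 3
  ring

theorem sum_sum_dist_circlePoint_le [NeZero N] (hmono : Monotone Ψ)
    (hΨ : ∀ n, Ψ (n + N) = Ψ n + 2 * π) :
    ∑ j : Fin N, ∑ k : Fin N, dist (circlePoint (Ψ j)) (circlePoint (Ψ k)) ≤
      2 * N * cot (π / (2 * N)) := by
  rw [sum_sum_dist_circlePoint_eq hΨ, ← sum_range_sin_pi_mul_div, mul_sum]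
  gcongr with m hm
  rw [← mul_sum, mul_assoc]
  gcongr
  exact sum_abs_sin_half_sub_le hmono hΨ (mem_range.1 hm).le

end AngleLift

section CyclicLift

variable {N : ℕ} [NeZero N] (ψ : Fin N → ℝ)

def cyclicLift (n : ℕ) : ℝ :=
  ψ (Fin.ofNat N n) + 2 * π * (n / N : ℕ)

lemma cyclicLift_add_period (n : ℕ) : cyclicLift ψ (n + N) = cyclicLift ψ n + 2 * π := by
  have hmod : Fin.ofNat N (n + N) = Fin.ofNat N n := Fin.ext (Nat.add_mod_right n N)
  simp only [cyclicLift, hmod, Nat.add_div_right n (NeZero.pos N)]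
  push_cast
  ring

lemma cyclicLift_val (k : Fin N) : cyclicLift ψ k = ψ k := by
  simp [cyclicLift, Nat.div_eq_of_lt k.isLt]

variable {ψ}

lemma monotone_cyclicLift (hψ : Monotone ψ) (hwidth : ∀ i j, ψ i ≤ ψ j + 2 * π) :
    Monotone (cyclicLift ψ) := by
  intro a b hab
  rcases (Nat.div_le_div_right (c := N) hab).lt_or_eq with hlt | heq
  · have : ((a / N : ℕ) : ℝ) + 1 ≤ (b / N : ℕ) := by exact_mod_cast hlt
    unfold cyclicLift
    nlinarith [hwidth (Fin.ofNat N a) (Fin.ofNat N b), pi_pos]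
  · have : Fin.ofNat N a ≤ Fin.ofNat N b := by
      rw [Fin.le_def, Fin.val_ofNat, Fin.val_ofNat]
      have := Nat.div_add_mod a N
      have := Nat.div_add_mod b N
      rw [heq] at *
      omega
    unfold cyclicLift
    rw [heq]
    linarith [hψ this]

end CyclicLift

lemma exists_monotone_angle_lift {N : ℕ} [NeZero N] {x : Fin N → EuclideanSpace ℝ (Fin (1 + 1))}
    (hx : ∀ k, x k ∈ sphere 0 1) :
    ∃ (σ : Equiv.Perm (Fin N)) (Ψ : ℕ → ℝ), Monotone Ψ ∧ (∀ n, Ψ (n + N) = Ψ n + 2 * π) ∧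
      ∀ k : Fin N, circlePoint (Ψ k) = x (σ k) := by
  choose θ hθ hθx using fun k ↦ exists_mem_Ioc_circlePoint_eq (hx k)
  refine ⟨Tuple.sort θ, cyclicLift (θ ∘ Tuple.sort θ), monotone_cyclicLift (Tuple.monotone_sort θ)
    fun i j ↦ ?_, cyclicLift_add_period _, fun k ↦ by rw [cyclicLift_val, Function.comp_apply, hθx]⟩
  simp only [Function.comp_apply]
  linarith [(hθ (Tuple.sort θ i)).2, (hθ (Tuple.sort θ j)).1]

theorem sum_sum_dist_le_of_mem_sphere {N : ℕ} (x : Fin N → EuclideanSpace ℝ (Fin (1 + 1)))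
    (hx : ∀ k, x k ∈ sphere 0 1) :
    ∑ j, ∑ k, dist (x j) (x k) ≤ 2 * N * cot (π / (2 * N)) := by
  rcases N.eq_zero_or_pos with rfl | hN
  · simp
  have : NeZero N := ⟨hN.ne'⟩
  obtain ⟨σ, Ψ, hmono, hΨ, hσ⟩ := exists_monotone_angle_lift hx
  calc ∑ j, ∑ k, dist (x j) (x k)
      = ∑ j : Fin N, ∑ k : Fin N, dist (circlePoint (Ψ j)) (circlePoint (Ψ k)) :=
        (Fintype.sum_equiv σ _ _ fun j ↦ Fintype.sum_equiv σ _ _ fun k ↦ by rw [hσ, hσ]).symm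
    _ ≤ 2 * N * cot (π / (2 * N)) := sum_sum_dist_circlePoint_le hmono hΨ

theorem sum_sum_dist_rootsOfUnityConfig (N : ℕ) :
    ∑ j, ∑ k, dist (rootsOfUnityConfig N j) (rootsOfUnityConfig N k) =
      2 * N * cot (π / (2 * N)) := by
  rcases N.eq_zero_or_pos with rfl | hN
  · simp
  have : NeZero N := ⟨hN.ne'⟩
  set Ψ : ℕ → ℝ := fun n ↦ 2 * π * (n + 1) / N
  have hΨ (n : ℕ) : Ψ (n + N) = Ψ n + 2 * π := by
    simp only [Ψ]
    push_cast
    field_simp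
    ring
  have hchord {m : ℕ} (hm : m < N) (j : ℕ) : |sin ((Ψ j - Ψ (j + m)) / 2)| = sin (π * m / N) := by
    have harg : (Ψ j - Ψ (j + m)) / 2 = -(π * m / N) := by
      simp only [Ψ]
      push_cast
      field_simp
      ring
    have hle : π * m / N ≤ π := div_le_of_le_mul₀ (by positivity) pi_pos.le
      (by gcongr)
    rw [harg, sin_neg, abs_neg, abs_of_nonneg (sin_nonneg_of_nonneg_of_le_pi (by positivity) hle)]
  change ∑ j : Fin N, ∑ k : Fin N, dist (circlePoint (Ψ j)) (circlePoint (Ψ k)) = _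
  rw [sum_sum_dist_circlePoint_eq hΨ, ← sum_range_sin_pi_mul_div, mul_sum]
  refine sum_congr rfl fun m hm ↦ ?_
  simp only [hchord (mem_range.1 hm), sum_const, card_range, nsmul_eq_mul]
  ring

lemma maxSumDistCircle_eq {N : ℕ} {c : ℝ}
    (hle : ∀ x : Fin N → EuclideanSpace ℝ (Fin (1 + 1)), (∀ k, x k ∈ sphere 0 1) →
      ∑ j, ∑ k, dist (x j) (x k) ≤ c)
    {x₀ : Fin N → EuclideanSpace ℝ (Fin (1 + 1))} (hx₀ : ∀ k, x₀ k ∈ sphere 0 1)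
    (heq : ∑ j, ∑ k, dist (x₀ j) (x₀ k) = c) :
    maxSumDistCircle N = c := by
  have hoffdiag (x : Fin N → EuclideanSpace ℝ (Fin (1 + 1))) :
      (∑ j, ∑ k, if j ≠ k then dist (x j) (x k) else 0) = ∑ j, ∑ k, dist (x j) (x k) :=
    Fintype.sum_congr _ _ fun j ↦ Fintype.sum_congr _ _ fun k ↦ by
      rcases eq_or_ne j k with rfl | h <;> simp [*]
  refine IsGreatest.csSup_eq ⟨⟨⟨x₀, hx₀⟩, (hoffdiag x₀).trans heq⟩, ?_⟩
  rintro _ ⟨x, rfl⟩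
  exact (hoffdiag x.1).trans_le (hle x.1 x.2)

theorem roots_of_unity_maximize_sum_of_distances_general (N : ℕ) :
    (∀ x : Fin N → EuclideanSpace ℝ (Fin (1 + 1)),
        (∀ k, x k ∈ sphere (0 : EuclideanSpace ℝ (Fin (1 + 1))) 1) →
        ∑ j, ∑ k, dist (x j) (x k) ≤ 2 * N * Real.cot (π / (2 * N)))
    ∧ (∑ j : Fin N, ∑ k : Fin N,
        dist (rootsOfUnityConfig N j) (rootsOfUnityConfig N k)
          = 2 * N * Real.cot (π / (2 * N)))
    ∧ maxSumDistCircle N = 2 * N * Real.cot (π / (2 * N)) :=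
  ⟨sum_sum_dist_le_of_mem_sphere, sum_sum_dist_rootsOfUnityConfig N,
    maxSumDistCircle_eq sum_sum_dist_le_of_mem_sphere (fun _ ↦ circlePoint_mem_sphere _)
      (sum_sum_dist_rootsOfUnityConfig N)⟩

/-- **The `N`th roots of unity maximize the sum of pairwise distances on the circle.**
Every `N`-point configuration on `S¹` has sum of distances at most `2N · cot(π/(2N))`,
with equality for the `N`th roots of unity; hence
`E_{−1}(S¹; N) = 2N · cot(π/(2N))`. -/
theorem roots_of_unity_maximize_sum_of_distances (N : ℕ) (hN : 2 ≤ N) :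
    (∀ x : Fin N → EuclideanSpace ℝ (Fin (1 + 1)),
        (∀ k, x k ∈ sphere (0 : EuclideanSpace ℝ (Fin (1 + 1))) 1) →
        ∑ j, ∑ k, dist (x j) (x k) ≤ 2 * N * Real.cot (π / (2 * N)))
    ∧ (∑ j : Fin N, ∑ k : Fin N,
        dist (rootsOfUnityConfig N j) (rootsOfUnityConfig N k)
          = 2 * N * Real.cot (π / (2 * N)))
    ∧ maxSumDistCircle N = 2 * N * Real.cot (π / (2 * N)) :=
  roots_of_unity_maximize_sum_of_distances_general N
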